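/- arXiv:math/0310125 — 2 statements merged into one kernel-verified Lean document; each statement's English description precedes it below -/
import Mathlib

section
/- Let k be a subfield of a field f and let G be a subgroup of the multiplicative group f* such that k* ≤ G. Assume that the quotient group G/k* is torsion; that k contains a primitive 4th root of unity whenever G/k* has an element of order 4; that for every prime p lying both in π(t(G)) and in π(G/k*) the field k contains a primitive p-th root of unity; and that the characteristic of k does not belong to π(G/k*). If g ∈ G \ k* and the image of g in the quotient group G/k* has order t, then the field extension k(g) of k has degree [k(g):k] = t. -/
open scoped IntermediateField

/-- The image of `Kˣ` in `Fˣ` under the algebra map, i.e. the subgroup `k*` of `f*`. -/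
def fieldUnitsRange (K F : Type*) [Field K] [Field F] [Algebra K F] : Subgroup Fˣ :=
  (Units.map (algebraMap K F : K →+* F).toMonoidHom).range

/-!
Let `t` be the order of the image of `g` in `G/k*`, so that `g ^ t = a` for some `a ∈ k*`.
If `a = b ^ p` for a prime `p ∣ t`, then `h = g ^ (t / p) / b` is a `p`-th root of unity in `G`
while `g ^ (t / p)` has order `p` modulo `k*`; hence `k` contains the `p`-th roots of unity,
`h ∈ k*`, and `g ^ (t / p) ∈ k*`, a contradiction. So `a` is not a `p`-th power for any prime
`p ∣ t`, and Capelli's theorem (which for `p = 2` and `4 ∣ t` needs `√-1 ∈ k`) makes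
`X ^ p ^ e - a` irreducible for `p ^ e ∥ t`. This is the minimal polynomial of
`g ^ (t / p ^ e) ∈ k(g)`, so every `p ^ e ∥ t` divides `[k(g) : k]`, which is at most `t`.
-/

open Polynomial IntermediateField

section Irreducible

variable {K : Type*} [Field K]

theorem X_pow_two_pow_sub_C_irreducible {ζ : K} (hζ : IsPrimitiveRoot ζ 4) {a : K}
    (ha : ∀ b : K, b ^ 2 ≠ a) (e : ℕ) : Irreducible (X ^ 2 ^ e - C a) := by
  induction e generalizing K a with
  | zero => simpa using irreducible_X_sub_C a
  | succ e ih =>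
    rw [pow_succ]
    refine X_pow_mul_sub_C_irreducible (X_pow_sub_C_irreducible_of_prime Nat.prime_two ha) ?_
    intro E _ _ x hx
    have hx_int : IsIntegral K x := not_not.mp fun h ↦ by
      simpa only [degree_zero, degree_X_pow_sub_C Nat.prime_two.pos,
        WithBot.natCast_ne_bot] using congr_arg degree (hx.symm.trans (dif_neg h))
    refine ih (hζ.map_of_injective (algebraMap K K⟮x⟯).injective) fun b hb ↦ ?_
    -- `N(b) ^ 2 = N(x) = -a`, and `-1 = ζ ^ 2` is a square in `K`.
    have hnorm : Algebra.norm K b ^ 2 = -a := by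
      rw [← map_pow, hb, ← adjoin.powerBasis_gen hx_int,
        Algebra.PowerBasis.norm_gen_eq_coeff_zero_minpoly]
      simp [minpoly_gen, hx]
    have hζ_sq : ζ ^ 2 = -1 :=
      (hζ.pow (by norm_num) (by norm_num : (4 : ℕ) = 2 * 2)).eq_neg_one_of_two_right
    exact ha (ζ * Algebra.norm K b) (by rw [mul_pow, hζ_sq, hnorm, neg_one_mul, neg_neg])

theorem X_pow_prime_pow_sub_C_irreducible {p : ℕ} (hp : p.Prime) {a : K}
    (ha : ∀ b : K, b ^ p ≠ a) {e : ℕ} (h4 : p = 2 → 2 ≤ e → ∃ ζ : K, IsPrimitiveRoot ζ 4) :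
    Irreducible (X ^ p ^ e - C a) := by
  by_cases hp2 : p = 2
  · subst hp2
    obtain he | he := Nat.lt_or_ge e 2
    · interval_cases e
      · simpa using irreducible_X_sub_C a
      · simpa using X_pow_sub_C_irreducible_of_prime Nat.prime_two ha
    · obtain ⟨ζ, hζ⟩ := h4 rfl he
      exact X_pow_two_pow_sub_C_irreducible hζ ha e
  · exact X_pow_sub_C_irreducible_of_prime_pow hp hp2 e ha

end Irreducible

section Degree

variable {K F : Type*} [Field K] [Field F] [Algebra K F]

theorem pow_factorization_dvd_finrank_adjoin {α : F} {a : K} {t p : ℕ} (ht : t ≠ 0)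
    (hα : α ^ t = algebraMap K F a) (hirr : Irreducible (X ^ p ^ t.factorization p - C a)) :
    p ^ t.factorization p ∣ Module.finrank K K⟮α⟯ := by
  set e := t.factorization p
  obtain ⟨s, hs⟩ : p ^ e ∣ t := Nat.ordProj_dvd t p
  have hα_int : IsIntegral K α := .of_pow ht.bot_lt (hα ▸ isIntegral_algebraMap)
  have : FiniteDimensional K K⟮α⟯ := adjoin.finiteDimensional hα_int
  have hroot : aeval (α ^ s) (X ^ p ^ e - C a) = 0 := by
    rw [map_sub, aeval_X_pow, aeval_C, ← pow_mul, mul_comm, ← hs, hα, sub_self]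
  have hminpoly : minpoly K (α ^ s) = X ^ p ^ e - C a :=
    (minpoly.eq_of_irreducible_of_monic hirr hroot
      (monic_X_pow_sub_C a (ne_zero_of_irreducible_X_pow_sub_C hirr))).symm
  have hle : K⟮α ^ s⟯ ≤ K⟮α⟯ := adjoin_simple_le_iff.mpr (pow_mem (mem_adjoin_simple_self K α) s)
  simpa [adjoin.finrank (hα_int.pow s), hminpoly] using finrank_dvd_of_le_right hle

theorem finrank_adjoin_eq_of_pow_eq {α : F} {a : K} {t : ℕ} (ht : t ≠ 0)
    (hα : α ^ t = algebraMap K F a)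
    (hirr : ∀ p, p.Prime → p ∣ t → Irreducible (X ^ p ^ t.factorization p - C a)) :
    Module.finrank K K⟮α⟯ = t := by
  have hα_int : IsIntegral K α := .of_pow ht.bot_lt (hα ▸ isIntegral_algebraMap)
  have hle : Module.finrank K K⟮α⟯ ≤ t := by
    rw [adjoin.finrank hα_int, ← natDegree_X_pow_sub_C (n := t) (r := a)]
    refine natDegree_le_of_dvd (minpoly.dvd K α ?_) (X_pow_sub_C_ne_zero ht.bot_lt a)
    simp [hα]
  have hdvd : t ∣ Module.finrank K K⟮α⟯ := by
    refine (Nat.dvd_iff_prime_pow_dvd_dvd _ t).mpr fun p k hp hpk ↦ ?_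
    rcases Nat.eq_zero_or_pos k with rfl | hk
    · exact one_dvd _
    have hpt : p ∣ t := (dvd_pow_self p hk.ne').trans hpk
    exact (Nat.pow_dvd_pow p ((hp.pow_dvd_iff_le_factorization ht).mp hpk)).trans
      (pow_factorization_dvd_finrank_adjoin ht hα (hirr p hp hpt))
  have : FiniteDimensional K K⟮α⟯ := adjoin.finiteDimensional hα_int
  exact le_antisymm hle (Nat.le_of_dvd Module.finrank_pos hdvd)

end Degree

theorem mk_subgroupOf_pow_eq_one_iff {M : Type*} [CommGroup M] {N G : Subgroup M} (g : G)
    (s : ℕ) :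
    (g : G ⧸ N.subgroupOf G) ^ s = 1 ↔ (g : M) ^ s ∈ N := by
  rw [← QuotientGroup.mk_pow, QuotientGroup.eq_one_iff, Subgroup.mem_subgroupOf]
  rfl

section FieldUnitsRange

variable {K F : Type*} [Field K] [Field F] [Algebra K F]

theorem mem_fieldUnitsRange_of_pow_eq_one {n : ℕ} [NeZero n] {ζ : K} (hζ : IsPrimitiveRoot ζ n)
    {u : Fˣ} (hu : u ^ n = 1) : u ∈ fieldUnitsRange K F := by
  obtain ⟨i, -, hi⟩ := (hζ.map_of_injective (algebraMap K F).injective).eq_pow_of_pow_eq_one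
    (by simpa using congrArg Units.val hu)
  exact ⟨(hζ.isUnit (NeZero.ne n)).unit ^ i, Units.ext (by simpa using hi)⟩

variable {G : Subgroup Fˣ}

local notation "Q" => G ⧸ Subgroup.subgroupOf (fieldUnitsRange K F) G

theorem pow_ne_of_algebraMap_eq_pow_orderOf_mk (hKG : fieldUnitsRange K F ≤ G) {g : G}
    (hg : IsOfFinOrder (g : Q)) {p : ℕ} (hp : p.Prime) (hpg : p ∣ orderOf (g : Q))
    (hζ : (∃ h : G, IsOfFinOrder h ∧ p ∣ orderOf h) → (∃ x : Q, p ∣ orderOf x ∧ x ≠ 1) →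
      ∃ ζ : K, IsPrimitiveRoot ζ p)
    {a : K} (ha : algebraMap K F a = ((g : Fˣ) : F) ^ orderOf (g : Q)) :
    ∀ b : K, b ^ p ≠ a := by
  intro b hb
  have : Fact p.Prime := ⟨hp⟩
  set t := orderOf (g : Q)
  set s := t / p
  have hgs_order : orderOf ((g : Q) ^ s) = p := orderOf_pow_orderOf_div hg.orderOf_pos.ne' hpg
  have hgs_ne : (g : Q) ^ s ≠ 1 := fun h1 ↦ hp.ne_one (by rw [← hgs_order, h1, orderOf_one])
  have hgs : (g : Fˣ) ^ s ∉ fieldUnitsRange K F := fun hmem ↦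
    hgs_ne ((mk_subgroupOf_pow_eq_one_iff g s).mpr hmem)
  have hb0 : b ≠ 0 := by
    rintro rfl
    rw [zero_pow hp.ne_zero, eq_comm] at hb
    exact pow_ne_zero t (g : Fˣ).ne_zero (ha.symm.trans (by rw [hb, map_zero]))
  set v : G := ⟨Units.map (algebraMap K F : K →+* F).toMonoidHom (Units.mk0 b hb0),
    hKG ⟨_, rfl⟩⟩
  have hv : (v : Fˣ) ∈ fieldUnitsRange K F := ⟨_, rfl⟩
  set h : G := g ^ s * v⁻¹
  have hh : h ^ p = 1 := by
    rw [mul_pow, ← pow_mul, Nat.div_mul_cancel hpg, inv_pow, mul_inv_eq_one]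
    ext
    simp [v, ← map_pow, hb, ha, t]
  have hh_mem : (h : Fˣ) ∈ fieldUnitsRange K F := by
    by_cases h1 : h = 1
    · simp [h1, one_mem]
    obtain ⟨ζ, hζ⟩ := hζ ⟨h, isOfFinOrder_iff_pow_eq_one.mpr ⟨p, hp.pos, hh⟩,
      (orderOf_eq_prime hh h1).symm.dvd⟩ ⟨_, hgs_order.symm.dvd, hgs_ne⟩
    exact mem_fieldUnitsRange_of_pow_eq_one hζ (by rw [← Subgroup.coe_pow, hh, Subgroup.coe_one])
  exact hgs (by simpa [h] using mul_mem hh_mem hv)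

end FieldUnitsRange

theorem degree_adjoin_eq_order_in_quotient_general
    (K F : Type*) [Field K] [Field F] [Algebra K F] (G : Subgroup Fˣ)
    (hKG : fieldUnitsRange K F ≤ G)
    -- the quotient group G/k* is torsion
    (htors : ∀ x : G ⧸ (fieldUnitsRange K F).subgroupOf G, IsOfFinOrder x)
    -- k contains a primitive 4th root of unity whenever G/k* has an element of order 4
    (h4 : (∃ x : G ⧸ (fieldUnitsRange K F).subgroupOf G, orderOf x = 4) →
      ∃ ζ : K, IsPrimitiveRoot ζ 4)
    -- for every prime p in π(t(G)) ∩ π(G/k*), k contains a primitive p-th root of unity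
    (hp : ∀ p : ℕ, p.Prime → (∃ g : G, IsOfFinOrder g ∧ p ∣ orderOf g) →
      (∃ x : G ⧸ (fieldUnitsRange K F).subgroupOf G, p ∣ orderOf x ∧ x ≠ 1) →
      ∃ ζ : K, IsPrimitiveRoot ζ p)
    (g : Fˣ) (hgG : g ∈ G)
    -- the image of g in G/k* has order t
    (t : ℕ)
    (ht : orderOf ((⟨g, hgG⟩ : G) : G ⧸ (fieldUnitsRange K F).subgroupOf G) = t) :
    Module.finrank K K⟮((g : F))⟯ = t := by
  subst ht
  set x := ((⟨g, hgG⟩ : G) : G ⧸ (fieldUnitsRange K F).subgroupOf G)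
  have ht0 : orderOf x ≠ 0 := (htors x).orderOf_pos.ne'
  obtain ⟨c, hc⟩ : g ^ orderOf x ∈ fieldUnitsRange K F :=
    (mk_subgroupOf_pow_eq_one_iff _ _).mp (pow_orderOf_eq_one x)
  have ha : algebraMap K F c = (g : F) ^ orderOf x := by simpa using congrArg Units.val hc
  refine finrank_adjoin_eq_of_pow_eq ht0 ha.symm fun p hpp hpt ↦ ?_
  have ha_not_pow := pow_ne_of_algebraMap_eq_pow_orderOf_mk hKG (htors x) hpp hpt (hp p hpp) ha
  refine X_pow_prime_pow_sub_C_irreducible hpp ha_not_pow fun hp2 he ↦ h4 ?_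
  subst hp2
  have h4t : 4 ∣ orderOf x := (Nat.pow_dvd_pow 2 he).trans (Nat.ordProj_dvd _ 2)
  exact ⟨x ^ (orderOf x / 4), orderOf_pow_orderOf_div ht0 h4t⟩

/-- Lemma 1.1. -/
theorem degree_adjoin_eq_order_in_quotient
    (K F : Type*) [Field K] [Field F] [Algebra K F] (G : Subgroup Fˣ)
    (hKG : fieldUnitsRange K F ≤ G)
    -- the quotient group G/k* is torsion
    (htors : ∀ x : G ⧸ (fieldUnitsRange K F).subgroupOf G, IsOfFinOrder x)
    -- k contains a primitive 4th root of unity whenever G/k* has an element of order 4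
    (h4 : (∃ x : G ⧸ (fieldUnitsRange K F).subgroupOf G, orderOf x = 4) →
      ∃ ζ : K, IsPrimitiveRoot ζ 4)
    -- for every prime p in π(t(G)) ∩ π(G/k*), k contains a primitive p-th root of unity
    (hp : ∀ p : ℕ, p.Prime → (∃ g : G, IsOfFinOrder g ∧ p ∣ orderOf g) →
      (∃ x : G ⧸ (fieldUnitsRange K F).subgroupOf G, p ∣ orderOf x ∧ x ≠ 1) →
      ∃ ζ : K, IsPrimitiveRoot ζ p)
    -- the characteristic of k does not belong to π(G/k*)
    (hchar : ∀ p : ℕ, p.Prime →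
      (∃ x : G ⧸ (fieldUnitsRange K F).subgroupOf G, p ∣ orderOf x ∧ x ≠ 1) →
      ringChar K ≠ p)
    -- g ∈ G \ k*
    (g : Fˣ) (hgG : g ∈ G) (hgk : g ∉ fieldUnitsRange K F)
    -- the image of g in G/k* has order t
    (t : ℕ)
    (ht : orderOf ((⟨g, hgG⟩ : G) : G ⧸ (fieldUnitsRange K F).subgroupOf G) = t) :
    Module.finrank K K⟮((g : F))⟯ = t :=
  degree_adjoin_eq_order_in_quotient_general K F G hKG htors h4 hp g hgG t ht
end

section
/- Let R be a ring, let G be a group, let M = aRG be a cyclic RG-module generated by a nonzero element a ∈ M, let I = Ann_{RG}(a), let H be a subgroup of G, and let U = aRH. Then the subgroup H controls the right ideal I, i.e., I = (I ∩ RH)RG, if and only if M = ⊕_{t ∈ T} Ut for a right transversal T to H in G (equivalently, if and only if M = U ⊗_{RH} RG). -/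
section

variable (R : Type*) [Ring R] (G : Type*) [Group G]
variable (M : Type*) [AddCommGroup M] [Module (MonoidAlgebra R G)ᵐᵒᵖ M]

/-- The set `Ut = aRH·t`: the image of the right `RH`-orbit of `a`, translated by `t`,
i.e. `{a·x·t | x ∈ RH}`, as an additive subgroup of the right `RG`-module `M`. -/
def orbitTranslate (a : M) (RH : Submodule R (MonoidAlgebra R G)) (t : G) :
    AddSubgroup M where
  carrier := {m | ∃ x ∈ RH, m = MulOpposite.op (x * MonoidAlgebra.of R G t) • a}
  zero_mem' := ⟨0, RH.zero_mem, by simp⟩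
  add_mem' := by
    rintro m₁ m₂ ⟨x₁, hx₁, rfl⟩ ⟨x₂, hx₂, rfl⟩
    refine ⟨x₁ + x₂, RH.add_mem hx₁ hx₂, ?_⟩
    rw [add_mul, MulOpposite.op_add, add_smul]
  neg_mem' := by
    rintro m ⟨x, hx, rfl⟩
    refine ⟨-x, RH.neg_mem hx, ?_⟩
    rw [neg_mul, MulOpposite.op_neg, neg_smul]

end

/-!
Split `R[G] = ⊕_{t ∈ T} RH·t` along the right cosets of `H` and let `π_t` be the projection onto
`RH·t`. Right multiplication by `g` carries the component at `Ht g⁻¹` to the component at `Ht`,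
so `(I ∩ RH)RG` is exactly the set of `r` all of whose components `π_t r` lie in `I`; thus `H`
controls `I` iff `I` is stable under every `π_t`. On the module side, `Ut` is the set of all
`a·π_t r`, and a relation `∑ a·x_t t = 0` with `x_t ∈ RH` says that `r = ∑ x_t t ∈ I`, where
`π_t r = x_t t`. So the `Ut` are independent iff `I` is stable under the `π_t`; they always span
`M = aRG`.
-/

open MulOpposite Subgroup

lemma AddSubgroup.iSupIndep_iff_finsetSum_eq_zero_imp_eq_zero {ι N : Type*} [AddCommGroup N]
    (p : ι → AddSubgroup N) :
    iSupIndep p ↔ ∀ (s : Finset ι) (v : ι → N),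
      (∀ i ∈ s, v i ∈ p i) → ∑ i ∈ s, v i = 0 → ∀ i ∈ s, v i = 0 := by
  rw [← iSupIndep_map_orderIso_iff (AddSubgroup.toIntSubmodule : AddSubgroup N ≃o _)]
  exact _root_.iSupIndep_iff_finsetSum_eq_zero_imp_eq_zero _

namespace Subgroup.IsComplement

variable {G : Type*} [Group G] {H : Subgroup G} {T : Set G}

lemma eq_of_mul_inv_mem (hT : IsComplement H T) {s t : T} (h : (s : G) * (t : G)⁻¹ ∈ H) :
    s = t :=
  (isComplement_iff_existsUnique_mul_inv_mem.1 hT s).unique (by simp [H.one_mem]) h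

lemma toRightFun_eq_of_mul_inv_mem (hT : IsComplement H T) {g : G} {t : T}
    (h : g * (t : G)⁻¹ ∈ H) : hT.toRightFun g = t :=
  (isComplement_iff_existsUnique_mul_inv_mem.1 hT g).unique (hT.mul_inv_toRightFun_mem g) h

end Subgroup.IsComplement

section RightAnnihilator

variable (A : Type*) [Ring A] {M : Type*} [AddCommGroup M] [Module Aᵐᵒᵖ M]

def rightAnnihilator (a : M) : Submodule Aᵐᵒᵖ A :=
  LinearMap.ker (LinearMap.toSpanSingleton Aᵐᵒᵖ M a ∘ₗ (opLinearEquiv Aᵐᵒᵖ).toLinearMap)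

variable {A} in
lemma mem_rightAnnihilator {a : M} {r : A} : r ∈ rightAnnihilator A a ↔ op r • a = 0 := Iff.rfl

end RightAnnihilator

/-- `H` controls `J` when `J = (J ∩ RH)·RG`; here `RH` is `supported R R H`. -/
def Subgroup.Controls {R : Type*} [Ring R] {G : Type*} [Group G] (H : Subgroup G)
    (J : Submodule (MonoidAlgebra R G)ᵐᵒᵖ (MonoidAlgebra R G)) : Prop :=
  J = Submodule.span (MonoidAlgebra R G)ᵐᵒᵖ (J ∩ MonoidAlgebra.supported R R (H : Set G))

namespace MonoidAlgebra

open scoped Classical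

variable {R : Type*} [Ring R] {G : Type*} [Group G]

lemma span_of_image_eq_supported (s : Set G) :
    Submodule.span R (of R G '' s) = supported R R s := by
  rw [supported_eq_span_single]
  rfl

section CosetProjection

variable (H : Subgroup G)

/-- The projection `π_t` onto `RH·t`: keep the coefficients on the right coset `Ht`. -/
noncomputable def cosetProj (t : G) : R[G] →+ R[G] :=
  coeffAddEquiv.symm.toAddMonoidHom.comp
    ((Finsupp.filterAddHom (· * t⁻¹ ∈ H)).comp coeffAddEquiv.toAddMonoidHom)

lemma coeff_cosetProj (t : G) (r : R[G]) (g : G) :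
    (cosetProj H t r).coeff g = if g * t⁻¹ ∈ H then r.coeff g else 0 := by
  simp [cosetProj, coeffAddEquiv, Finsupp.filterAddHom, Finsupp.filter_apply]

lemma cosetProj_mul_single (t g : G) (c : R) (w : R[G]) :
    cosetProj H t (w * single g c) = cosetProj H (t * g⁻¹) w * single g c := by
  ext h
  have : h * g⁻¹ * (t * g⁻¹)⁻¹ = h * t⁻¹ := by group
  simp only [coeff_cosetProj, coeff_mul_single_apply, this]
  split_ifs <;> simp

lemma cosetProj_mul_of_of_mem_supported {x : R[G]} (hx : x ∈ supported R R (H : Set G))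
    (s t : G) : cosetProj H t (x * of R G s) = if s * t⁻¹ ∈ H then x * of R G s else 0 := by
  ext g
  rw [of_apply, coeff_cosetProj, coeff_mul_single_apply, mul_one]
  by_cases hgs : g * s⁻¹ ∈ H
  · have : g * t⁻¹ = g * s⁻¹ * (s * t⁻¹) := by group
    rw [this, H.mul_mem_cancel_left hgs]
    split_ifs <;> simp
  · have hg : x.coeff (g * s⁻¹) = 0 := mem_supported'.1 hx _ hgs
    split_ifs <;> simp [hg]

lemma exists_cosetProj_eq_mul_of (t : G) (r : R[G]) :
    ∃ x ∈ supported R R (H : Set G), cosetProj H t r = x * of R G t := by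
  refine ⟨cosetProj H t r * of R G t⁻¹, ?_, ?_⟩
  · rw [mem_supported']
    intro g hg
    rw [SetLike.mem_coe] at hg
    rw [of_apply, coeff_mul_single_apply, coeff_cosetProj, inv_inv, mul_inv_cancel_right,
      if_neg hg, zero_mul]
  · rw [mul_assoc, ← map_mul, inv_mul_cancel, map_one, mul_one]

end CosetProjection

variable {H : Subgroup G} {T : Set G}

lemma sum_cosetProj (hT : IsComplement H T) (r : R[G]) (s : Finset T)
    (hs : ∀ g ∈ r.coeff.support, hT.toRightFun g ∈ s) :
    ∑ t ∈ s, cosetProj H t r = r := by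
  ext g
  rw [coeff_sum, Finset.sum_apply']
  simp only [coeff_cosetProj]
  by_cases hg : g ∈ r.coeff.support
  · rw [Finset.sum_eq_single_of_mem _ (hs g hg), if_pos (hT.mul_inv_toRightFun_mem g)]
    intro t _ hne
    exact if_neg fun hgt => hne (hT.toRightFun_eq_of_mul_inv_mem hgt).symm
  · rw [Finsupp.notMem_support_iff.1 hg]
    simp

lemma cosetProj_mem_of_mem_span_inter {J : Submodule R[G]ᵐᵒᵖ R[G]} {w : R[G]}
    (hw : w ∈ Submodule.span R[G]ᵐᵒᵖ (J ∩ supported R R (H : Set G))) (t : G) :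
    cosetProj H t w ∈ J := by
  induction hw using Submodule.span_induction generalizing t with
  | mem x hx =>
    have hx1 : x * of R G 1 = x := by rw [map_one, mul_one]
    rw [← hx1, cosetProj_mul_of_of_mem_supported H hx.2]
    split_ifs
    · exact hx1.symm ▸ hx.1
    · exact J.zero_mem
  | zero => simp
  | add x y _ _ hx hy => simpa using J.add_mem (hx t) (hy t)
  | smul s w _ hw =>
    have hsw : s • w = ∑ g ∈ s.unop.coeff.support, w * single g (s.unop.coeff g) := by
      conv_lhs => rw [smul_eq_mul_unop, ← sum_coeff_single (unop s)]
      rw [Finsupp.sum, Finset.mul_sum]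
    rw [hsw, map_sum]
    refine J.sum_mem fun g _ => ?_
    rw [cosetProj_mul_single]
    exact J.smul_mem (op (single g (s.unop.coeff g))) (hw _)

lemma mem_span_inter_supported_iff (hT : IsComplement H T) (J : Submodule R[G]ᵐᵒᵖ R[G])
    (w : R[G]) :
    w ∈ Submodule.span R[G]ᵐᵒᵖ (J ∩ supported R R (H : Set G)) ↔
      ∀ t : T, cosetProj H t w ∈ J := by
  refine ⟨fun hw t => cosetProj_mem_of_mem_span_inter hw t, fun hw => ?_⟩
  rw [← sum_cosetProj hT w (w.coeff.support.image hT.toRightFun) fun g hg =>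
    Finset.mem_image_of_mem _ hg]
  refine Submodule.sum_mem _ fun t _ => ?_
  obtain ⟨x, hx, hxt⟩ := exists_cosetProj_eq_mul_of H t w
  have hxJ : x ∈ J := by
    have : x = cosetProj H t w * of R G (t : G)⁻¹ := by
      rw [hxt, mul_assoc, ← map_mul, mul_inv_cancel, map_one, mul_one]
    exact this ▸ J.smul_mem (op (of R G (t : G)⁻¹)) (hw t)
  rw [hxt]
  exact Submodule.smul_mem _ (op (of R G (t : G))) (Submodule.subset_span ⟨hxJ, hx⟩)

lemma controls_iff_forall_cosetProj_mem (hT : IsComplement H T) (J : Submodule R[G]ᵐᵒᵖ R[G]) :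
    H.Controls J ↔ ∀ r ∈ J, ∀ t : T, cosetProj H t r ∈ J := by
  rw [Subgroup.Controls, le_antisymm_iff,
    and_iff_left (Submodule.span_le.2 Set.inter_subset_left), SetLike.le_def]
  simp only [mem_span_inter_supported_iff hT]

section Module

variable {M : Type*} [AddCommGroup M] [Module R[G]ᵐᵒᵖ M]

lemma cosetProj_smul_mem_orbitTranslate (a : M) (t : G) (r : R[G]) :
    op (cosetProj H t r) • a ∈ orbitTranslate R G M a (supported R R (H : Set G)) t :=
  let ⟨x, hx, h⟩ := exists_cosetProj_eq_mul_of H t r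
  ⟨x, hx, by rw [h]⟩

lemma iSup_orbitTranslate_eq_top (hT : IsComplement H T) {a : M}
    (ha : Submodule.span R[G]ᵐᵒᵖ {a} = ⊤) :
    ⨆ t : T, orbitTranslate R G M a (supported R R (H : Set G)) t = ⊤ := by
  refine eq_top_iff.2 fun m _ => ?_
  obtain ⟨s, rfl⟩ := Submodule.mem_span_singleton.1 (ha ▸ Submodule.mem_top : m ∈ _)
  rw [← op_unop s, ← sum_cosetProj hT (unop s) _ fun g hg => Finset.mem_image_of_mem _ hg,
    Finset.op_sum, Finset.sum_smul]
  exact AddSubgroup.sum_mem _ fun t _ =>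
    AddSubgroup.mem_iSup_of_mem t (cosetProj_smul_mem_orbitTranslate a (t : G) _)

lemma iSupIndep_orbitTranslate_iff (hT : IsComplement H T) (a : M) :
    iSupIndep (fun t : T => orbitTranslate R G M a (supported R R (H : Set G)) t) ↔
      ∀ r ∈ rightAnnihilator R[G] a, ∀ t : T, cosetProj H t r ∈ rightAnnihilator R[G] a := by
  rw [AddSubgroup.iSupIndep_iff_finsetSum_eq_zero_imp_eq_zero]
  constructor
  · intro hind r hr t
    rw [mem_rightAnnihilator] at hr ⊢
    let s := insert t (r.coeff.support.image hT.toRightFun)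
    refine hind s (fun t => op (cosetProj H (t : G) r) • a)
      (fun t _ => cosetProj_smul_mem_orbitTranslate a (t : G) r) ?_ t (Finset.mem_insert_self _ _)
    rw [← Finset.sum_smul, ← Finset.op_sum, sum_cosetProj hT r s fun g hg =>
      Finset.mem_insert_of_mem (Finset.mem_image_of_mem _ hg), hr]
  · intro hproj s v hv hsum
    choose! x hx hvx using hv
    have hr : ∑ t ∈ s, x t * of R G t ∈ rightAnnihilator R[G] a := by
      rw [mem_rightAnnihilator, Finset.op_sum, Finset.sum_smul, ← hsum]
      exact Finset.sum_congr rfl fun t ht => (hvx t ht).symm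
    intro t ht
    have hproj_t : cosetProj H t (∑ t' ∈ s, x t' * of R G t') = x t * of R G t := by
      rw [map_sum, Finset.sum_eq_single_of_mem t ht]
      · rw [cosetProj_mul_of_of_mem_supported H (hx t ht), if_pos (by simp [H.one_mem])]
      · intro t' ht' hne
        rw [cosetProj_mul_of_of_mem_supported H (hx t' ht'),
          if_neg fun h => hne (hT.eq_of_mul_inv_mem h)]
    rw [hvx t ht, ← hproj_t, ← mem_rightAnnihilator]
    exact hproj _ hr t

end Module

end MonoidAlgebra

open MonoidAlgebra in
theorem controls_iff_directSum_general
    (R : Type*) [Ring R] (G : Type*) [Group G]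
    (M : Type*) [AddCommGroup M] [Module (MonoidAlgebra R G)ᵐᵒᵖ M]
    (a : M)
    -- M = aRG
    (hM : Submodule.span (MonoidAlgebra R G)ᵐᵒᵖ {a} = ⊤)
    (H : Subgroup G)
    -- T is a right transversal to H in G
    (T : Set G) (htrans : ∀ g : G, ∃! t, t ∈ T ∧ g * t⁻¹ ∈ H) :
    -- I = (I ∩ RH)RG  ↔  M = ⊕_{t ∈ T} Ut
    ({r : MonoidAlgebra R G | MulOpposite.op r • a = 0} =
        (Submodule.span (MonoidAlgebra R G)ᵐᵒᵖ
          ({r : MonoidAlgebra R G | MulOpposite.op r • a = 0} ∩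
            (Submodule.span R (⇑(MonoidAlgebra.of R G) '' (H : Set G)) :
              Set (MonoidAlgebra R G))) : Set (MonoidAlgebra R G)))
      ↔
    (iSupIndep (fun t : T => orbitTranslate R G M a
        (Submodule.span R (⇑(MonoidAlgebra.of R G) '' (H : Set G))) (t : G)) ∧
      (⨆ t : T, orbitTranslate R G M a
        (Submodule.span R (⇑(MonoidAlgebra.of R G) '' (H : Set G))) (t : G)) = ⊤) := by
  have hT : IsComplement (H : Set G) T := isComplement_iff_existsUnique_mul_inv_mem.2 fun g =>
    let ⟨t, ⟨htT, hgt⟩, huniq⟩ := htrans g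
    ⟨⟨t, htT⟩, hgt, fun u hu => Subtype.ext (huniq u ⟨u.2, hu⟩)⟩
  rw [span_of_image_eq_supported, iSupIndep_orbitTranslate_iff hT,
    and_iff_left (iSup_orbitTranslate_eq_top hT hM)]
  exact SetLike.coe_set_eq.trans (controls_iff_forall_cosetProj_mem hT (rightAnnihilator R[G] a))

/-- for a cyclic right `RG`-module `M = aRG` with `I = Ann_{RG}(a)`,
a subgroup `H ≤ G` and `U = aRH`, the subgroup `H` controls `I` (i.e. `I = (I ∩ RH)RG`)
if and only if `M = ⊕_{t ∈ T} Ut` for a right transversal `T` to `H` in `G`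
(equivalently, if and only if `M = U ⊗_{RH} RG`). -/
theorem controls_iff_directSum
    (R : Type*) [Ring R] (G : Type*) [Group G]
    (M : Type*) [AddCommGroup M] [Module (MonoidAlgebra R G)ᵐᵒᵖ M]
    (a : M) (ha : a ≠ 0)
    -- M = aRG
    (hM : Submodule.span (MonoidAlgebra R G)ᵐᵒᵖ {a} = ⊤)
    (H : Subgroup G)
    -- T is a right transversal to H in G
    (T : Set G) (htrans : ∀ g : G, ∃! t, t ∈ T ∧ g * t⁻¹ ∈ H) :
    -- I = (I ∩ RH)RG  ↔  M = ⊕_{t ∈ T} Ut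
    ({r : MonoidAlgebra R G | MulOpposite.op r • a = 0} =
        (Submodule.span (MonoidAlgebra R G)ᵐᵒᵖ
          ({r : MonoidAlgebra R G | MulOpposite.op r • a = 0} ∩
            (Submodule.span R (⇑(MonoidAlgebra.of R G) '' (H : Set G)) :
              Set (MonoidAlgebra R G))) : Set (MonoidAlgebra R G)))
      ↔
    (iSupIndep (fun t : T => orbitTranslate R G M a
        (Submodule.span R (⇑(MonoidAlgebra.of R G) '' (H : Set G))) (t : G)) ∧
      (⨆ t : T, orbitTranslate R G M a
        (Submodule.span R (⇑(MonoidAlgebra.of R G) '' (H : Set G))) (t : G)) = ⊤) :=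
  controls_iff_directSum_general R G M a hM H T htrans
end
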